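/- arXiv:1707.07812 — 2 statements merged into one kernel-verified Lean document; each statement's English description precedes it below -/
import Mathlib

section
/- Let C be a finitely generated abelian group that is a Z[1/p]-module, and let k be an algebraic closure of F_p. Then the group Hom(C, k*) is finite if and only if C has finite torsion, and in that case |Hom(C, k*)| equals the order of the torsion subgroup of C. -/
/-!
Over `R = ℤ[1/p]`, being torsion is the same as being torsion as an abelian group. A finitely
generated torsion `R`-module `C` is finite: the subgroup generated by finitely many `R`-generators
is finite, hence stable under `1/p`, hence all of `C`. Then `p` acts invertibly on `C`, so `|C|` is
prime to `p`, and `k` has enough roots of unity to make `Hom(C, k*)` (noncanonically) isomorphic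
to `C`. If instead some `x ∈ C` has infinite order, divisibility of `k*` lets every value at `x`
extend to a homomorphism on `C`, so `Hom(C, k*)` surjects onto the infinite group `k*`.
-/

theorem algebraMap_int_smul {R M : Type*} [Ring R] [Algebra ℤ R] [AddCommGroup M] [Module R M]
    (n : ℤ) (x : M) : algebraMap ℤ R n • x = n • x := by
  rw [eq_intCast, Int.cast_smul_eq_zsmul]

namespace IsLocalization

theorem isTorsion_iff_isAddTorsion (S : Submonoid ℤ) (R : Type*) [CommRing R] [Algebra ℤ R]
    [IsLocalization S R] (M : Type*) [AddCommGroup M] [Module R M]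
    (hS : S ≤ nonZeroDivisors ℤ) :
    Module.IsTorsion R M ↔ IsAddTorsion M := by
  have : IsDomain R := isDomain_of_le_nonZeroDivisors R hS
  rw [isAddTorsion_iff_isTorsion_int]
  refine forall_congr' fun x => ⟨fun ⟨a, ha⟩ => ?_, fun ⟨n, hn⟩ => ?_⟩
  · obtain ⟨⟨m, s⟩, hms⟩ := IsLocalization.surj S (a : R)
    have hm : m ≠ 0 := by
      rintro rfl
      rw [map_zero, mul_eq_zero] at hms
      exact hms.elim (nonZeroDivisors.coe_ne_zero a) (IsLocalization.map_units R s).ne_zero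
    refine ⟨⟨m, mem_nonZeroDivisors_of_ne_zero hm⟩, ?_⟩
    rw [Submonoid.smul_def] at ha ⊢
    rw [← algebraMap_int_smul (R := R), ← hms, mul_comm, mul_smul, ha, smul_zero]
  · refine ⟨⟨algebraMap ℤ R n, nonZeroDivisors_le_comap S R n.2⟩, ?_⟩
    rw [Submonoid.smul_def] at hn ⊢
    exact (algebraMap_int_smul _ x).trans hn

variable {M : Type*} [AddCommGroup M]

theorem zsmul_injective_of_mem (S : Submonoid ℤ) (R : Type*) [CommRing R] [Algebra ℤ R]
    [IsLocalization S R] [Module R M] {s : ℤ} (hs : s ∈ S) :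
    Function.Injective (fun x : M => s • x) := by
  intro x y hxy
  simp only [← algebraMap_int_smul (R := R) s] at hxy
  exact (IsLocalization.map_units R (⟨s, hs⟩ : S)).smul_left_cancel.mp hxy

theorem smul_mem_of_finite (S : Submonoid ℤ) {R : Type*} [CommRing R] [Algebra ℤ R]
    [IsLocalization S R] [Module R M] (A : AddSubgroup M) [Finite A]
    (r : R) {x : M} (hx : x ∈ A) : r • x ∈ A := by
  obtain ⟨⟨m, s⟩, hrs⟩ := IsLocalization.surj S r
  have hsurj : Function.Surjective (fun y : A => (s : ℤ) • y) :=
    Finite.surjective_of_injective fun y z hyz =>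
      Subtype.ext (zsmul_injective_of_mem S R s.2 (congrArg Subtype.val hyz))
  obtain ⟨y, hy⟩ := hsurj ⟨x, hx⟩
  obtain rfl : (s : ℤ) • (y : M) = x := congrArg Subtype.val hy
  rw [← algebraMap_int_smul (R := R), smul_smul, hrs, algebraMap_int_smul]
  exact A.zsmul_mem y.2 m

theorem finite_of_isAddTorsion (S : Submonoid ℤ) (R : Type*) [CommRing R] [Algebra ℤ R]
    [IsLocalization S R] [Module R M] [Module.Finite R M] (hM : IsAddTorsion M) : Finite M := by
  obtain ⟨s, hs⟩ := Module.Finite.fg_top (R := R) (M := M)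
  let A := AddSubgroup.closure (s : Set M)
  have : Finite A := AddCommGroup.finite_of_fg_isAddTorsion A (hM.addSubgroup A)
  let A' : Submodule R M :=
    { A with smul_mem' := fun r x hx => smul_mem_of_finite S A r hx }
  have hA : ⊤ ≤ A' := hs ▸ Submodule.span_le.mpr AddSubgroup.subset_closure
  exact Finite.of_surjective ((↑) : A → M) fun x => ⟨⟨x, hA trivial⟩, rfl⟩

end IsLocalization

theorem not_dvd_natCard_of_injective_nsmul {G : Type*} [AddGroup G] [Finite G] {p : ℕ}
    (hp : p.Prime) (h : Function.Injective (fun x : G => p • x)) : ¬ p ∣ Nat.card G := by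
  have : Fact p.Prime := ⟨hp⟩
  intro hdvd
  obtain ⟨x, hx⟩ := exists_prime_addOrderOf_dvd_card' p hdvd
  have hx0 : x = 0 := h (by simp only [← hx, addOrderOf_nsmul_eq_zero, nsmul_zero])
  exact hp.one_lt.ne' (by rw [← hx, hx0, addOrderOf_zero])

theorem card_addMonoidHom_additive_units {k G : Type*} [Field k] [IsSepClosed k] [AddCommGroup G]
    [Finite G] (h : (Nat.card G : k) ≠ 0) : Nat.card (G →+ Additive kˣ) = Nat.card G := by
  have : NeZero ((Monoid.exponent (Multiplicative G) : ℕ) : k) :=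
    ⟨fun h0 => h (by
      obtain ⟨c, hc⟩ := AddGroup.exponent_dvd_nat_card (G := G)
      rw [hc, Nat.cast_mul, ← Monoid.exponent_multiplicative, h0, zero_mul])⟩
  rw [Nat.card_congr AddMonoidHom.toMultiplicativeLeft,
    CommGroup.card_monoidHom_of_hasEnoughRootsOfUnity]
  rfl

theorem IsAlgClosed.surjective_pow_units (k : Type*) [Field k] [IsAlgClosed k] {n : ℕ}
    (hn : n ≠ 0) : Function.Surjective (fun u : kˣ => u ^ n) := by
  intro u
  obtain ⟨z, hz⟩ := IsAlgClosed.exists_pow_nat_eq (u : k) (Nat.pos_of_ne_zero hn)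
  have hz0 : z ≠ 0 := by
    rintro rfl
    exact u.ne_zero (by rw [← hz, zero_pow hn])
  exact ⟨Units.mk0 z hz0, Units.ext (by simp [hz])⟩

noncomputable instance IsAlgClosed.divisibleByAdditiveUnits (k : Type*) [Field k] [IsAlgClosed k] :
    DivisibleBy (Additive kˣ) ℤ :=
  @AddGroup.divisibleByIntOfDivisibleByNat _ _ <|
    divisibleByOfSMulRightSurj _ _ fun hn => IsAlgClosed.surjective_pow_units k hn

theorem AddMonoidHom.surjective_eval_of_not_isOfFinAddOrder {M G : Type*} [AddCommGroup M]
    [AddCommGroup G] [DivisibleBy G ℤ] {x : M} (hx : ¬ IsOfFinAddOrder x) :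
    Function.Surjective (fun φ : M →+ G => φ x) := by
  intro g
  obtain ⟨φ, hφ⟩ := (Module.Baer.of_divisible G).extension_property_addMonoidHom
    (zmultiplesHom M x) (injective_zsmul_iff_not_isOfFinAddOrder.mpr hx) (zmultiplesHom G g)
  exact ⟨φ, by simpa using DFunLike.congr_fun hφ 1⟩

instance instInfiniteUnits (k : Type*) [Field k] [Infinite k] : Infinite kˣ :=
  have : Infinite {a : k // a ≠ 0} := ((Set.finite_singleton (0 : k)).infinite_compl).to_subtype
  Infinite.of_injective _ unitsEquivNeZero.symm.injective

/-- For a finitely generated `ℤ[1/p]`-module `C` and `k` an algebraic closure of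
`F_p`, the group `Hom(C, k*)` is finite iff `C` is torsion (i.e. its free rank is
zero, so its torsion is all of it and is finite), and in that case `|Hom(C, k*)|`
equals the order of the torsion submodule of `C`. -/
theorem hom_to_units_finite_iff_torsion
    (p : ℕ) (hp : p.Prime)
    (k : Type*) [Field k] [IsAlgClosed k] [CharP k p]
    (C : Type*) [AddCommGroup C]
    [Module (Localization.Away (p : ℤ)) C]
    [Module.Finite (Localization.Away (p : ℤ)) C] :
    (Finite (C →+ Additive kˣ) ↔
      Module.IsTorsion (Localization.Away (p : ℤ)) C) ∧
    (Module.IsTorsion (Localization.Away (p : ℤ)) C →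
      Nat.card (C →+ Additive kˣ)
        = Nat.card (Submodule.torsion (Localization.Away (p : ℤ)) C)) := by
  let R := Localization.Away (p : ℤ)
  let S := Submonoid.powers (p : ℤ)
  have hS : S ≤ nonZeroDivisors ℤ :=
    powers_le_nonZeroDivisors_of_noZeroDivisors (by exact_mod_cast hp.ne_zero)
  have htors := IsLocalization.isTorsion_iff_isAddTorsion S R C hS
  have hfinite (hC : Module.IsTorsion R C) : Finite C :=
    IsLocalization.finite_of_isAddTorsion S R (htors.mp hC)
  have hcard (hC : Module.IsTorsion R C) : Nat.card (C →+ Additive kˣ) = Nat.card C := by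
    have := hfinite hC
    have hp_inj : Function.Injective (fun x : C => p • x) := fun x y hxy =>
      IsLocalization.zsmul_injective_of_mem S R (Submonoid.mem_powers _)
        (by simpa only [natCast_zsmul] using hxy)
    refine card_addMonoidHom_additive_units ?_
    rw [Ne, CharP.cast_eq_zero_iff k p]
    exact not_dvd_natCard_of_injective_nsmul hp hp_inj
  refine ⟨⟨fun hfin => htors.mpr fun x => ?_, fun hC => ?_⟩, fun hC => ?_⟩
  · by_contra hx
    exact not_finite_iff_infinite.mpr
      (Infinite.of_surjective _ (AddMonoidHom.surjective_eval_of_not_isOfFinAddOrder hx)) hfin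
  · have := hfinite hC
    exact Nat.finite_of_card_ne_zero (hcard hC ▸ Nat.card_pos.ne')
  · rw [hcard hC]
    exact (Nat.card_congr (Equiv.subtypeUnivEquiv fun x => @hC x)).symm
end

section
/- (Lang's theorem for GL_n over the algebraic closure of a finite field) Let k be an algebraic closure of F_p, q a power of p, and let σ : GL_n(k) → GL_n(k) raise each matrix entry to the q-th power. Then for every A ∈ GL_n(k) there exists B ∈ GL_n(k) with A = B^{-1} σ(B). -/
/-!
Let `F v = A σ(v)`, a bijective `σ`-semilinear map of `kⁿ`. The columns of `B⁻¹` are fixed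
by `F` exactly when `A = B⁻¹ σ(B)`, so it suffices that the `F`-fixed vectors span `kⁿ`.
Their span `W` satisfies `F(W) ⊆ W` and `F⁻¹(W) ⊆ W` (`σ` is onto), and `F - 1` maps `W`
onto `W` because `x ↦ x ^ q - x` is onto `k`. If `W ≠ kⁿ`, `F` induces an injective
semilinear map of `kⁿ / W`; a nonzero fixed vector of it lifts, through `F - 1` on `W`,
to a fixed vector outside `W`.

Such a fixed vector exists on any nonzero finite-dimensional space: for the iterates
`gᵢ = Fⁱ v` and the first `m` with `gₘ ∈ span (g₀, …, gₘ₋₁)`, the coefficients of a fixed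
vector in the `gᵢ` are polynomials in its last coefficient `t`, which solves `E(t) = t`
for a polynomial `E` of degree `≥ q` with `E' = 0`. As `E - X` is separable, it has a
nonzero root.
-/

namespace Polynomial

variable {k : Type*} [Field k]

theorem exists_pow_sub_self_eq [IsAlgClosed k] {q : ℕ} (hq : 2 ≤ q) (c : k) :
    ∃ μ : k, μ ^ q - μ = c := by
  have hdeg : ((X : k[X]) ^ q - X - C c).natDegree = q := by
    rw [sub_sub, natDegree_sub_eq_left_of_natDegree_lt] <;> rw [natDegree_X_pow]
    exact (natDegree_add_le _ _).trans_lt (by simp; omega)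
  obtain ⟨μ, hμ⟩ :=
    IsAlgClosed.exists_root _ (degree_ne_of_natDegree_ne (n := 0) (by rw [hdeg]; omega))
  exact ⟨μ, by simpa [sub_eq_zero] using hμ⟩

theorem exists_ne_zero_eval_eq_self_of_derivative_eq_zero [IsAlgClosed k] {E : k[X]}
    (hE : derivative E = 0) (h2 : 2 ≤ E.natDegree) : ∃ t ≠ 0, E.eval t = t := by
  classical
  have hsep : (E - X).Separable := ⟨0, -1, by simp [hE]⟩
  have hdeg : (E - X).natDegree = E.natDegree :=
    natDegree_sub_eq_left_of_natDegree_lt (by rw [natDegree_X]; omega)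
  have hcard : (E - X).roots.toFinset.card = E.natDegree := by
    rw [Multiset.toFinset_card_of_nodup (nodup_roots hsep), IsAlgClosed.card_roots_eq_natDegree,
      hdeg]
  obtain ⟨t, ht, ht0⟩ := Finset.exists_mem_ne (s := (E - X).roots.toFinset) (by omega) 0
  refine ⟨t, ht0, ?_⟩
  simpa [sub_eq_zero] using (mem_roots'.mp (Multiset.mem_toFinset.mp ht)).2

/-- `∑ i ∈ range m, (langPoly q a (i + 1)).eval t • gᵢ` is fixed by a map `F` that is
semilinear over `x ↦ x ^ q` with `F gᵢ = gᵢ₊₁` for `i + 1 < m` and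
`F gₘ₋₁ = ∑ i ∈ range m, aᵢ • gᵢ`, whenever `(langPoly q a m).eval t = t`. -/
noncomputable def langPoly (q : ℕ) (a : ℕ → k) : ℕ → k[X]
  | 0 => 0
  | i + 1 => langPoly q a i ^ q + C (a i) * X ^ q

variable {q : ℕ} {a : ℕ → k}

@[simp] theorem langPoly_zero : langPoly q a 0 = 0 := rfl

theorem langPoly_succ (i : ℕ) : langPoly q a (i + 1) = langPoly q a i ^ q + C (a i) * X ^ q := rfl

theorem derivative_langPoly (hq : (q : k) = 0) (i : ℕ) : derivative (langPoly q a i) = 0 := by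
  induction i with
  | zero => simp
  | succ i ih => simp [langPoly_succ, derivative_pow, ih, hq]

theorem langPoly_succ_of_eq_zero (hq : q ≠ 0) {i : ℕ} (hi : langPoly q a i = 0) :
    langPoly q a (i + 1) = C (a i) * X ^ q := by
  rw [langPoly_succ, hi, zero_pow hq, zero_add]

theorem natDegree_langPoly_succ (hq : 2 ≤ q) {i : ℕ} (hi : q ≤ (langPoly q a i).natDegree) :
    (langPoly q a (i + 1)).natDegree = q * (langPoly q a i).natDegree := by
  have hlt : (C (a i) * X ^ q).natDegree < (langPoly q a i ^ q).natDegree := by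
    rw [natDegree_pow]
    calc (C (a i) * X ^ q).natDegree ≤ q := natDegree_C_mul_X_pow_le _ _
      _ < q * (langPoly q a i).natDegree := by nlinarith
  rw [langPoly_succ, natDegree_add_eq_left_of_natDegree_lt hlt, natDegree_pow]

theorem langPoly_eq_zero_or_le_natDegree (hq : 2 ≤ q) (i : ℕ) :
    langPoly q a i = 0 ∨ q ≤ (langPoly q a i).natDegree := by
  induction i with
  | zero => simp
  | succ i ih =>
    rcases ih with h | h
    · rw [langPoly_succ_of_eq_zero (by omega) h]
      by_cases hai : a i = 0
      · simp [hai]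
      · simp [natDegree_C_mul_X_pow q _ hai]
    · right
      rw [natDegree_langPoly_succ hq h]
      nlinarith

theorem le_natDegree_langPoly (hq : 2 ≤ q) {i j : ℕ} (hj : j < i) (ha : a j ≠ 0) :
    q ≤ (langPoly q a i).natDegree := by
  induction i, hj using Nat.le_induction with
  | base =>
    rcases langPoly_eq_zero_or_le_natDegree (a := a) hq j with h | h
    · rw [langPoly_succ_of_eq_zero (by omega) h, natDegree_C_mul_X_pow q _ ha]
    · rw [natDegree_langPoly_succ hq h]; nlinarith
  | succ i _ ih => rw [natDegree_langPoly_succ hq ih]; nlinarith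

end Polynomial

section FixedPoints

open Function Submodule Finset

theorem exists_linearIndepOn_range_and_mem_span {K V : Type*} [DivisionRing K] [AddCommGroup V]
    [Module K V] [FiniteDimensional K V] (g : ℕ → V) :
    ∃ m, LinearIndepOn K g (range m) ∧ g m ∈ span K (g '' range m) := by
  classical
  have hex : ∃ m, ¬LinearIndepOn K g (range m) := ⟨Module.finrank K V + 1, fun h => by
    simpa using h.fintype_card_le_finrank⟩
  obtain ⟨m, hm⟩ : ∃ m, Nat.find hex = m + 1 :=
    Nat.exists_eq_succ_of_ne_zero fun h => Nat.find_spec hex (by rw [h]; simp)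
  have hind : LinearIndepOn K g (range m) := not_not.1 (Nat.find_min hex (by omega))
  have hdep := Nat.find_spec hex
  rw [hm, range_add_one, coe_insert, linearIndepOn_insert (by simp)] at hdep
  exact ⟨m, hind, not_not.1 fun hm => hdep ⟨hind, hm⟩⟩

variable {k V : Type*} [Field k] [AddCommGroup V] [Module k V] {σ : k →+* k}

open Polynomial in
theorem exists_ne_zero_isFixedPt [IsAlgClosed k] [FiniteDimensional k V] [Nontrivial V]
    {q : ℕ} (hq2 : 2 ≤ q) (hq : (q : k) = 0) (hσ : ∀ x, σ x = x ^ q) {F : V →ₛₗ[σ] V}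
    (hF : Injective F) : ∃ u ≠ 0, IsFixedPt F u := by
  obtain ⟨v, hv⟩ := exists_ne (0 : V)
  set g : ℕ → V := fun i => F^[i] v
  have hg_succ (i : ℕ) : g (i + 1) = F (g i) := iterate_succ_apply' F i v
  obtain ⟨m, hind, hspan⟩ := exists_linearIndepOn_range_and_mem_span (K := k) g
  obtain ⟨a, ha⟩ := (mem_span_image_finset_iff_exists_fun' k).1 hspan
  obtain ⟨j, hjm, haj⟩ : ∃ j < m, a j ≠ 0 := by
    by_contra! h
    have hgm : g m = 0 := by
      rw [← ha]
      exact sum_eq_zero fun i hi => by rw [h i (mem_range.1 hi), zero_smul]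
    exact hv (hF.iterate m (hgm.trans (iterate_map_zero F m).symm))
  obtain ⟨t, ht0, ht⟩ := exists_ne_zero_eval_eq_self_of_derivative_eq_zero
    (derivative_langPoly hq m) (hq2.trans (le_natDegree_langPoly hq2 hjm haj))
  set e : ℕ → k := fun i => (langPoly q a i).eval t
  have he (i : ℕ) : e (i + 1) = e i ^ q + t ^ q * a i := by
    simp only [e, langPoly_succ, eval_add, eval_pow, eval_mul, eval_C, eval_X, mul_comm]
  refine ⟨∑ i ∈ range m, e (i + 1) • g i, fun h0 => ht0 ?_, ?_⟩
  · obtain ⟨m, rfl⟩ : ∃ m', m = m' + 1 := ⟨m - 1, by omega⟩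
    simpa [e, ht] using linearIndepOn_finset_iff.1 hind _ h0 m (by simp)
  · calc F (∑ i ∈ range m, e (i + 1) • g i)
          = ∑ i ∈ range m, e (i + 1) ^ q • g (i + 1) := by simp [map_sum, hσ, hg_succ]
      _ = ∑ i ∈ range (m + 1), e i ^ q • g i := by
          simp [sum_range_succ' _ m, e, zero_pow (by omega : q ≠ 0)]
      _ = ∑ i ∈ range m, e i ^ q • g i + t ^ q • ∑ i ∈ range m, a i • g i := by
          rw [sum_range_succ, ha, show e m = t from ht]
      _ = ∑ i ∈ range m, e (i + 1) • g i := by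
          simp only [he, add_smul, smul_sum, smul_smul, sum_add_distrib]

variable (F : V →ₛₗ[σ] V)

theorem span_fixedPoints_le_comap : span k (fixedPoints F) ≤ (span k (fixedPoints F)).comap F :=
  span_le.2 fun v hv => by
    show F v ∈ span k (fixedPoints F)
    rw [hv.eq]
    exact subset_span hv

theorem mem_span_fixedPoints_of_apply_mem [RingHomSurjective σ] (hF : Injective F) {x : V}
    (hx : F x ∈ span k (fixedPoints F)) : x ∈ span k (fixedPoints F) := by
  have himage : F '' fixedPoints F = fixedPoints F :=
    Set.ext fun y => ⟨by rintro ⟨x, hx, rfl⟩; rwa [hx.eq], fun hy => ⟨y, hy, hy.eq⟩⟩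
  rw [← himage, ← map_span] at hx
  obtain ⟨y, hy, hyx⟩ := hx
  rwa [← hF hyx]

theorem exists_sub_eq_of_mem_span_fixedPoints (hσ : ∀ c, ∃ μ, σ μ - μ = c) {z : V}
    (hz : z ∈ span k (fixedPoints F)) : ∃ w ∈ span k (fixedPoints F), F w - w = z := by
  choose μ hμ using hσ
  obtain ⟨c, hc, rfl⟩ := mem_span_set.1 hz
  refine ⟨c.sum fun u r => μ r • u, sum_mem fun u hu => smul_mem _ _ (subset_span (hc hu)), ?_⟩
  simp only [Finsupp.sum, map_sum, map_smulₛₗ, ← sum_sub_distrib]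
  refine sum_congr rfl fun u hu => ?_
  rw [(hc hu).eq, ← sub_smul, hμ]

theorem span_fixedPoints_eq_top [IsAlgClosed k] [FiniteDimensional k V] {q : ℕ} (hq2 : 2 ≤ q)
    (hq : (q : k) = 0) (hσ : ∀ x, σ x = x ^ q) (hF : Injective F) :
    span k (fixedPoints F) = ⊤ := by
  set W := span k (fixedPoints F)
  have : RingHomSurjective σ := ⟨fun x => by
    obtain ⟨y, hy⟩ := IsAlgClosed.exists_pow_nat_eq x (by omega : 0 < q)
    exact ⟨y, by rw [hσ, hy]⟩⟩
  let G := W.mapQ W F (span_fixedPoints_le_comap F)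
  have hG : Injective G := by
    rw [injective_iff_map_eq_zero]
    rintro ⟨x⟩ hx
    exact (Submodule.Quotient.mk_eq_zero W).2
      (mem_span_fixedPoints_of_apply_mem F hF ((Submodule.Quotient.mk_eq_zero W).1 hx))
  by_contra hW
  have : Nontrivial (V ⧸ W) := Submodule.Quotient.nontrivial_iff.2 hW
  obtain ⟨u, hu0, hu⟩ := exists_ne_zero_isFixedPt hq2 hq hσ hG
  obtain ⟨x, rfl⟩ := W.mkQ_surjective u
  obtain ⟨w, hw, hwx⟩ := exists_sub_eq_of_mem_span_fixedPoints F
    (fun c => by simpa [hσ] using Polynomial.exists_pow_sub_self_eq hq2 c)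
    ((Submodule.Quotient.eq W).1 hu)
  have hxw : x - w ∈ fixedPoints F := by
    show F (x - w) = x - w
    rw [map_sub, sub_eq_sub_iff_sub_eq_sub, hwx]
  exact hu0 ((Submodule.Quotient.mk_eq_zero W).2
    (sub_add_cancel x w ▸ add_mem (subset_span hxw) hw))

theorem exists_basis_isFixedPt {ι : Type*} (b₀ : Module.Basis ι k V)
    (h : span k (fixedPoints F) = ⊤) : ∃ b : Module.Basis ι k V, ∀ i, IsFixedPt F (b i) := by
  obtain ⟨s, hs, hspan, hli⟩ := exists_linearIndependent k (fixedPoints F)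
  let b := Module.Basis.mk hli (by rw [Subtype.range_coe, hspan, h])
  refine ⟨b.reindex (b.indexEquiv b₀), fun i => ?_⟩
  rw [Module.Basis.reindex_apply, Module.Basis.mk_apply]
  exact hs (Subtype.mem _)

end FixedPoints

namespace Matrix

open Function

variable {n K : Type*} [Fintype n] [Field K] (σ : K →+* K) (A : Matrix n n K)

def semilinearMulVec : (n → K) →ₛₗ[σ] (n → K) where
  toFun v := A *ᵥ fun i => σ (v i)
  map_add' v w := by
    simp only [Pi.add_apply, map_add]
    exact mulVec_add A _ _
  map_smul' c v := by
    simp only [Pi.smul_apply, smul_eq_mul, map_mul]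
    exact mulVec_smul A (σ c) _

@[simp]
theorem semilinearMulVec_apply (v : n → K) : semilinearMulVec σ A v = A *ᵥ fun i => σ (v i) :=
  rfl

theorem semilinearMulVec_injective [DecidableEq n] (hA : IsUnit A) :
    Injective (semilinearMulVec σ A) :=
  fun _ _ h => funext fun i => σ.injective (congrFun (mulVec_injective_iff_isUnit.2 hA h) i)

theorem mul_map_toMatrix_eq_of_isFixedPt [DecidableEq n] (b : Module.Basis n K (n → K))
    (hb : ∀ j, IsFixedPt (semilinearMulVec σ A) (b j)) :
    A * ((Pi.basisFun K n).toMatrix b).map σ = (Pi.basisFun K n).toMatrix b := by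
  ext i j
  simpa [Module.Basis.toMatrix_apply, mul_apply, mulVec, dotProduct] using congrFun (hb j) i

end Matrix

/-- Lang's theorem for `GL_n` over the algebraic closure of a finite field:
if `σ` raises each matrix entry to the `q`-th power (`q = p^ν`), then every
`A ∈ GL_n(k)` can be written `A = B⁻¹ σ(B)`. -/
theorem lang_theorem_GL
    (p : ℕ) (hp : p.Prime) (ν : ℕ) (hν : 1 ≤ ν) (n : ℕ)
    (k : Type*) [Field k] [IsAlgClosed k] [CharP k p]
    (σ : k →+* k) (hσ : ∀ x : k, σ x = x ^ p ^ ν)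
    (A : GL (Fin n) k) :
    ∃ B : GL (Fin n) k,
      A = B⁻¹ * Units.map ((σ.mapMatrix :
        Matrix (Fin n) (Fin n) k →+* Matrix (Fin n) (Fin n) k) :
        Matrix (Fin n) (Fin n) k →* Matrix (Fin n) (Fin n) k) B := by
  have hq2 : 2 ≤ p ^ ν := hp.two_le.trans (Nat.le_self_pow (by omega) p)
  have hq : ((p ^ ν : ℕ) : k) = 0 :=
    (CharP.cast_eq_zero_iff k p _).2 (dvd_pow_self p (by omega))
  let e := Pi.basisFun k (Fin n)
  obtain ⟨b, hb⟩ := exists_basis_isFixedPt _ e <| span_fixedPoints_eq_top _ hq2 hq hσ <|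
    Matrix.semilinearMulVec_injective σ _ A.isUnit
  let C : GL (Fin n) k := ⟨e.toMatrix b, b.toMatrix e, e.toMatrix_mul_toMatrix_flip b,
    b.toMatrix_mul_toMatrix_flip e⟩
  refine ⟨C⁻¹, ?_⟩
  rw [inv_inv, map_inv, eq_mul_inv_iff_mul_eq]
  exact Units.ext (Matrix.mul_map_toMatrix_eq_of_isFixedPt σ _ b hb)
end
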